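/- Let 2/3 < ν < 4/5 and let ν₋, ν₊ satisfy: ν₋, ν₊ > 0; 3ν/2 − 1 < ν₋ < ν/2; 0 < ν₊ < 1 − ν; ν₋ + ν₊ = 1 − ν. Define S_SG(ζ) := tan((ζ + iπν)/(2i)) / tan((ζ − iπν)/(2i)), and with g_a(ζ) := sinh((ζ − iπa)/2)/sinh((ζ + iπa)/2) define S_CDD(ζ) := g_{ν−ν₋}(ζ) g_{ν+ν₊}(ζ) g_{1−ν+ν₋}(ζ) g_{1−ν−ν₊}(ζ). Then the deformed scattering function S^{11} := S_SG · S_CDD has a simple pole at ζ = iπν whose residue lies in iℝ₊: the limit as ζ → iπν of (ζ − iπν)·S^{11}(ζ) equals 2i·tan(πν)·S_CDD(iπν) = i·r with r > 0 real. -/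
import Mathlib
set_option maxHeartbeats 1000000


open Complex Filter Topology

/-- The sine-Gordon breather–breather (b₁b₁) scattering function. -/
noncomputable def SSG (ν : ℝ) (ζ : ℂ) : ℂ :=
  Complex.tan ((ζ + Complex.I * (Real.pi : ℂ) * (ν : ℂ)) / (2 * Complex.I)) /
  Complex.tan ((ζ - Complex.I * (Real.pi : ℂ) * (ν : ℂ)) / (2 * Complex.I))

/-- The elementary factor g_a(ζ) = sinh((ζ − iπa)/2)/sinh((ζ + iπa)/2). -/
noncomputable def gfac (a : ℝ) (ζ : ℂ) : ℂ :=
  Complex.sinh ((ζ - Complex.I * (Real.pi : ℂ) * (a : ℂ)) / 2) /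
  Complex.sinh ((ζ + Complex.I * (Real.pi : ℂ) * (a : ℂ)) / 2)

/-- The CDD factor S_CDD = g_{ν−ν₋} g_{ν+ν₊} g_{1−ν+ν₋} g_{1−ν−ν₊}. -/
noncomputable def SCDD (ν νm νp : ℝ) (ζ : ℂ) : ℂ :=
  gfac (ν - νm) ζ * gfac (ν + νp) ζ * gfac (1 - ν + νm) ζ * gfac (1 - ν - νp) ζ

lemma sinpos {x : ℝ} (h0 : 0 < x) (h1 : x < 1) : 0 < Real.sin (Real.pi * x) :=
  Real.sin_pos_of_pos_of_lt_pi (by positivity)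
    (by nlinarith [Real.pi_pos])

lemma sinh_at (ν a : ℝ) :
    Complex.sinh ((Complex.I * (Real.pi : ℂ) * (ν : ℂ) + Complex.I * (Real.pi : ℂ) * (a : ℂ)) / 2)
      = ((Real.sin (Real.pi * ((ν + a) / 2)) : ℝ) : ℂ) * Complex.I := by
  have h : (Complex.I * (Real.pi : ℂ) * (ν : ℂ) + Complex.I * (Real.pi : ℂ) * (a : ℂ)) / 2
      = ((Real.pi * ((ν + a) / 2) : ℝ) : ℂ) * Complex.I := by push_cast; ring
  rw [h, Complex.sinh_mul_I, Complex.ofReal_sin]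

lemma gfac_at (ν a : ℝ) :
    gfac a (Complex.I * (Real.pi : ℂ) * (ν : ℂ))
      = ((Real.sin (Real.pi * ((ν - a) / 2)) / Real.sin (Real.pi * ((ν + a) / 2)) : ℝ) : ℂ) := by
  unfold gfac
  have h1 : (Complex.I * (Real.pi : ℂ) * (ν : ℂ) - Complex.I * (Real.pi : ℂ) * (a : ℂ)) / 2
      = ((Real.pi * ((ν - a) / 2) : ℝ) : ℂ) * Complex.I := by push_cast; ring
  have h2 : (Complex.I * (Real.pi : ℂ) * (ν : ℂ) + Complex.I * (Real.pi : ℂ) * (a : ℂ)) / 2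
      = ((Real.pi * ((ν + a) / 2) : ℝ) : ℂ) * Complex.I := by push_cast; ring
  rw [h1, h2, Complex.sinh_mul_I, Complex.sinh_mul_I,
    mul_div_mul_right _ _ Complex.I_ne_zero, Complex.ofReal_div, Complex.ofReal_sin,
    Complex.ofReal_sin]

lemma gfac_contAt (ν a : ℝ) (h : Real.sin (Real.pi * ((ν + a) / 2)) ≠ 0) :
    ContinuousAt (gfac a) (Complex.I * (Real.pi : ℂ) * (ν : ℂ)) := by
  unfold gfac
  apply ContinuousAt.div
  · exact (Complex.continuous_sinh.comp
      ((continuous_id.sub continuous_const).div_const 2)).continuousAt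
  · exact (Complex.continuous_sinh.comp
      ((continuous_id.add continuous_const).div_const 2)).continuousAt
  · rw [sinh_at]
    exact mul_ne_zero (Complex.ofReal_ne_zero.2 h) Complex.I_ne_zero

/-- the deformed scattering function S¹¹ = S_SG·S_CDD has a simple pole
at ζ = iπν whose residue lim_{ζ→iπν} (ζ − iπν)·S¹¹(ζ) = 2i·tan(πν)·S_CDD(iπν) lies in
iℝ₊, i.e. equals i·r with r > 0 real. -/
theorem S11_positive_residue (ν : ℝ) (h1 : 2/3 < ν) (h2 : ν < 4/5)
    (νm νp : ℝ) (hm : 0 < νm) (hp : 0 < νp)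
    (hm1 : 3*ν/2 - 1 < νm) (hm2 : νm < ν/2)
    (hp1 : νp < 1 - ν) (hsum : νm + νp = 1 - ν) :
    Filter.Tendsto
      (fun ζ : ℂ => (ζ - Complex.I * (Real.pi : ℂ) * (ν : ℂ)) * (SSG ν ζ * SCDD ν νm νp ζ))
      (𝓝[≠] (Complex.I * (Real.pi : ℂ) * (ν : ℂ)))
      (𝓝 (2 * Complex.I * ((Real.tan (Real.pi * ν) : ℝ) : ℂ) *
        SCDD ν νm νp (Complex.I * (Real.pi : ℂ) * (ν : ℂ)))) ∧
    ∃ r : ℝ, 0 < r ∧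
      2 * Complex.I * ((Real.tan (Real.pi * ν) : ℝ) : ℂ) *
        SCDD ν νm νp (Complex.I * (Real.pi : ℂ) * (ν : ℂ)) = Complex.I * (r : ℂ) := by
  have hpi := Real.pi_pos
  set p : ℂ := Complex.I * (Real.pi : ℂ) * (ν : ℂ) with hpdef
  have h2I : (2 * Complex.I : ℂ) ≠ 0 := by
    simp [Complex.I_ne_zero]
  -- real sign facts
  have A1n : 0 < Real.sin (Real.pi * ((ν - (ν - νm)) / 2)) := sinpos (by linarith) (by linarith)
  have A1d : 0 < Real.sin (Real.pi * ((ν + (ν - νm)) / 2)) := sinpos (by linarith) (by linarith)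
  have A2n : Real.sin (Real.pi * ((ν - (ν + νp)) / 2)) < 0 := by
    have e : Real.pi * ((ν - (ν + νp)) / 2) = -(Real.pi * (νp / 2)) := by ring
    have := sinpos (x := νp / 2) (by linarith) (by linarith)
    rw [e, Real.sin_neg]; linarith
  have A2d : 0 < Real.sin (Real.pi * ((ν + (ν + νp)) / 2)) := sinpos (by linarith) (by linarith)
  have A3n : 0 < Real.sin (Real.pi * ((ν - (1 - ν + νm)) / 2)) :=
    sinpos (by linarith) (by linarith)
  have A3d : 0 < Real.sin (Real.pi * ((ν + (1 - ν + νm)) / 2)) :=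
    sinpos (by linarith) (by linarith)
  have A4n : 0 < Real.sin (Real.pi * ((ν - (1 - ν - νp)) / 2)) :=
    sinpos (by linarith) (by linarith)
  have A4d : 0 < Real.sin (Real.pi * ((ν + (1 - ν - νp)) / 2)) :=
    sinpos (by linarith) (by linarith)
  set q1 : ℝ := Real.sin (Real.pi * ((ν - (ν - νm)) / 2)) / Real.sin (Real.pi * ((ν + (ν - νm)) / 2)) with hq1def
  set q2 : ℝ := Real.sin (Real.pi * ((ν - (ν + νp)) / 2)) / Real.sin (Real.pi * ((ν + (ν + νp)) / 2)) with hq2def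
  set q3 : ℝ := Real.sin (Real.pi * ((ν - (1 - ν + νm)) / 2)) / Real.sin (Real.pi * ((ν + (1 - ν + νm)) / 2)) with hq3def
  set q4 : ℝ := Real.sin (Real.pi * ((ν - (1 - ν - νp)) / 2)) / Real.sin (Real.pi * ((ν + (1 - ν - νp)) / 2)) with hq4def
  have hq1 : 0 < q1 := div_pos A1n A1d
  have hq2 : q2 < 0 := div_neg_of_neg_of_pos A2n A2d
  have hq3 : 0 < q3 := div_pos A3n A3d
  have hq4 : 0 < q4 := div_pos A4n A4d
  have hsinν : 0 < Real.sin (Real.pi * ν) :=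
    Real.sin_pos_of_pos_of_lt_pi (by nlinarith) (by nlinarith)
  have hcosν : Real.cos (Real.pi * ν) < 0 :=
    Real.cos_neg_of_pi_div_two_lt_of_lt (by nlinarith) (by nlinarith)
  have htan : Real.tan (Real.pi * ν) < 0 := by
    rw [Real.tan_eq_sin_div_cos]
    exact div_neg_of_pos_of_neg hsinν hcosν
  -- value of SCDD at the pole
  have hSCDD : SCDD ν νm νp p = ((q1 * q2 * q3 * q4 : ℝ) : ℂ) := by
    rw [hpdef]
    simp only [SCDD, gfac_at, hq1def, hq2def, hq3def, hq4def]
    push_cast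
    ring
  constructor
  · -- the limit
    have L1 : Tendsto (fun w : ℂ => w / Complex.tan w) (𝓝[≠] (0 : ℂ)) (𝓝 1) := by
      have h0 : Complex.cos 0 ≠ 0 := by simp
      have h := Complex.hasDerivAt_tan h0
      rw [hasDerivAt_iff_tendsto_slope] at h
      have h1 : Tendsto (fun w : ℂ => Complex.tan w / w) (𝓝[≠] (0 : ℂ)) (𝓝 1) := by
        have e1 : (1 : ℂ) = 1 / Complex.cos 0 ^ 2 := by simp
        rw [e1]
        exact h.congr fun w => by
          rw [slope_def_field, Complex.tan_zero, sub_zero, sub_zero]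
      have h2 := h1.inv₀ one_ne_zero
      rw [inv_one] at h2
      exact h2.congr fun w => inv_div _ _
    have L2 : Tendsto (fun ζ : ℂ => (ζ - p) / (2 * Complex.I)) (𝓝[≠] p) (𝓝[≠] (0 : ℂ)) := by
      rw [tendsto_nhdsWithin_iff]
      constructor
      · have ht : Tendsto (fun ζ : ℂ => (ζ - p) / (2 * Complex.I)) (𝓝 p)
            (𝓝 ((p - p) / (2 * Complex.I))) :=
          (((continuous_id.sub continuous_const).div_const _).tendsto p)
        simpa using ht.mono_left nhdsWithin_le_nhds
      · filter_upwards [self_mem_nhdsWithin] with ζ hζ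
        exact Set.mem_compl_singleton_iff.2
          (div_ne_zero (sub_ne_zero.2 hζ) h2I)
    have L3 := L1.comp L2
    have hval : (p + p) / (2 * Complex.I) = ((Real.pi * ν : ℝ) : ℂ) := by
      rw [hpdef, div_eq_iff h2I]
      push_cast
      ring
    have L4 : Tendsto (fun ζ : ℂ => Complex.tan ((ζ + p) / (2 * Complex.I))) (𝓝[≠] p)
        (𝓝 ((Real.tan (Real.pi * ν) : ℝ) : ℂ)) := by
      have hcosC : Complex.cos (((Real.pi * ν : ℝ) : ℂ)) ≠ 0 := by
        rw [← Complex.ofReal_cos]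
        exact Complex.ofReal_ne_zero.2 (ne_of_lt hcosν)
      have hc : ContinuousAt (fun ζ : ℂ => Complex.tan ((ζ + p) / (2 * Complex.I))) p := by
        have hg : ContinuousAt Complex.tan ((p + p) / (2 * Complex.I)) := by
          rw [hval]; exact Complex.continuousAt_tan.2 hcosC
        exact ContinuousAt.comp (g := Complex.tan)
          (f := fun ζ : ℂ => (ζ + p) / (2 * Complex.I)) (x := p) hg
          ((continuous_id.add continuous_const).div_const _).continuousAt
      have ht : Tendsto (fun ζ : ℂ => Complex.tan ((ζ + p) / (2 * Complex.I))) (𝓝[≠] p)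
          (𝓝 (Complex.tan ((p + p) / (2 * Complex.I)))) :=
        hc.tendsto.mono_left nhdsWithin_le_nhds
      rwa [hval, ← Complex.ofReal_tan] at ht
    have L5 : Tendsto (fun ζ : ℂ => SCDD ν νm νp ζ) (𝓝[≠] p) (𝓝 (SCDD ν νm νp p)) := by
      have hc : ContinuousAt (SCDD ν νm νp) p := by
        rw [hpdef]
        unfold SCDD
        exact (((gfac_contAt ν _ (ne_of_gt A1d)).mul (gfac_contAt ν _ (ne_of_gt A2d))).mul
          (gfac_contAt ν _ (ne_of_gt A3d))).mul (gfac_contAt ν _ (ne_of_gt A4d))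
      exact hc.tendsto.mono_left (nhdsWithin_le_nhds (s := {p}ᶜ))
    have Lmain := (L4.mul (L3.const_mul (2 * Complex.I))).mul L5
    have feq : ∀ ζ : ℂ,
        Complex.tan ((ζ + p) / (2 * Complex.I)) *
          (2 * Complex.I * ((fun w : ℂ => w / Complex.tan w) ((ζ - p) / (2 * Complex.I)))) *
          SCDD ν νm νp ζ
        = (ζ - p) * (SSG ν ζ * SCDD ν νm νp ζ) := by
      intro ζ
      simp only
      have hX : 2 * Complex.I * ((ζ - p) / (2 * Complex.I)) = ζ - p := by
        field_simp
      rw [← mul_div_assoc, hX]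
      simp only [SSG, ← hpdef]
      ring
    have := Lmain.congr feq
    convert this using 2
    ring
  · refine ⟨2 * Real.tan (Real.pi * ν) * (q1 * q2 * q3 * q4), ?_, ?_⟩
    · have hq12 : q1 * q2 < 0 := mul_neg_of_pos_of_neg hq1 hq2
      have hq123 : q1 * q2 * q3 < 0 := mul_neg_of_neg_of_pos hq12 hq3
      have hq1234 : q1 * q2 * q3 * q4 < 0 := mul_neg_of_neg_of_pos hq123 hq4
      have := mul_pos_of_neg_of_neg htan hq1234
      linarith
    · rw [hSCDD]
      push_cast
      ring
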